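/- Let Γ and Γ' be z-knotted combinatorial triangulations and let F and F' be (2,2,2)-faces of second type in Γ and Γ' respectively. Then for every bijection g from the vertices of F to the vertices of F', the connected sum Γ#_gΓ' is not z-knotted. -/

import Mathlib

universe u v

/-- The data of an embedded graph: a simple graph together with a collection of
(triangular) faces, each face recorded as the finite set of its vertices. -/
structure PreTriangulation (V : Type u) where
  graph : SimpleGraph V
  faces : Set (Finset V)

namespace PreTriangulation

variable {V : Type u} {V' : Type v}

/-- `T` is a combinatorial triangulation: a finite simple connected graph together with
a collection of faces, each face being a set of three pairwise adjacent vertices, such that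
every edge lies in exactly two faces and two distinct faces share at most one edge. -/
structure IsTriangulation [DecidableEq V] (T : PreTriangulation V) : Prop where
  finiteVerts : Finite V
  connected : T.graph.Connected
  face_card : ∀ F ∈ T.faces, F.card = 3
  face_adj : ∀ F ∈ T.faces, ∀ x ∈ F, ∀ y ∈ F, x ≠ y → T.graph.Adj x y
  edge_in_two_faces : ∀ x y : V, T.graph.Adj x y →
    {F | F ∈ T.faces ∧ x ∈ F ∧ y ∈ F}.ncard = 2
  faces_share_at_most_one_edge :
    ∀ F ∈ T.faces, ∀ G ∈ T.faces, F ≠ G → (F ∩ G).card ≤ 2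

section

variable [DecidableEq V] [DecidableEq V']

/-- A zigzag in `T`: a cyclic sequence of vertices (encoded as a periodic function `ℤ → V`
whose minimal period `n` is the length of the zigzag, with `n > 3`) such that any two
consecutive vertices are distinct and adjacent, any three consecutive vertices lie in a
unique face, and the faces determined by two consecutive triples are distinct. -/
structure Zigzag (T : PreTriangulation V) where
  n : ℕ
  three_lt_n : 3 < n
  seq : ℤ → V
  periodic : ∀ i : ℤ, seq (i + n) = seq i
  n_minimal : ∀ m : ℕ, 0 < m → (∀ i : ℤ, seq (i + m) = seq i) → n ≤ m
  seq_ne : ∀ i : ℤ, seq i ≠ seq (i + 1)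
  seq_adj : ∀ i : ℤ, T.graph.Adj (seq i) (seq (i + 1))
  face : ℤ → Finset V
  face_mem : ∀ i : ℤ, face i ∈ T.faces
  subset_face : ∀ i : ℤ, ({seq i, seq (i + 1), seq (i + 2)} : Finset V) ⊆ face i
  face_unique : ∀ i : ℤ, ∀ G ∈ T.faces,
    ({seq i, seq (i + 1), seq (i + 2)} : Finset V) ⊆ G → G = face i
  face_ne : ∀ i : ℤ, face i ≠ face (i + 1)

variable {T : PreTriangulation V}

/-- Two zigzags are equivalent if they agree up to a cyclic shift or up to a cyclic
shift combined with reversal. -/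
def ZigzagEquiv (Z Z' : T.Zigzag) : Prop :=
  (∃ k : ℤ, ∀ i : ℤ, Z'.seq i = Z.seq (i + k)) ∨
  (∃ k : ℤ, ∀ i : ℤ, Z'.seq i = Z.seq (k - i))

/-- `T` is z-knotted: it has exactly one zigzag up to cyclic shift and reversal. -/
def ZKnotted (T : PreTriangulation V) [DecidableEq V] : Prop :=
  Nonempty T.Zigzag ∧ ∀ Z Z' : T.Zigzag, ZigzagEquiv Z Z'

/-- `T` has exactly two zigzags up to cyclic shift and reversal. -/
def HasExactlyTwoZigzags (T : PreTriangulation V) [DecidableEq V] : Prop :=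
  ∃ Z₁ Z₂ : T.Zigzag, ¬ ZigzagEquiv Z₁ Z₂ ∧
    ∀ Z : T.Zigzag, ZigzagEquiv Z Z₁ ∨ ZigzagEquiv Z Z₂

/-- `T` has exactly three zigzags up to cyclic shift and reversal. -/
def HasExactlyThreeZigzags (T : PreTriangulation V) [DecidableEq V] : Prop :=
  ∃ Z₁ Z₂ Z₃ : T.Zigzag, ¬ ZigzagEquiv Z₁ Z₂ ∧ ¬ ZigzagEquiv Z₁ Z₃ ∧ ¬ ZigzagEquiv Z₂ Z₃ ∧
    ∀ Z : T.Zigzag, ZigzagEquiv Z Z₁ ∨ ZigzagEquiv Z Z₂ ∨ ZigzagEquiv Z Z₃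

namespace Zigzag

/-- The zigzag passes from `x` to `y` (in this order) at some position. -/
def Passes (Z : T.Zigzag) (x y : V) : Prop :=
  ∃ i : ℤ, Z.seq i = x ∧ Z.seq (i + 1) = y

/-- The zigzag passes from `x` to `y` (in this order) at two distinct positions
of the cyclic sequence. -/
def PassesTwice (Z : T.Zigzag) (x y : V) : Prop :=
  ∃ i j : ℤ, (i : ZMod Z.n) ≠ (j : ZMod Z.n) ∧
    Z.seq i = x ∧ Z.seq (i + 1) = y ∧ Z.seq j = x ∧ Z.seq (j + 1) = y

/-- The edge `{x, y}` is of first type: the zigzag contains both `x, y` and `y, x`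
as pairs of consecutive vertices. -/
def FirstTypeEdge (Z : T.Zigzag) (x y : V) : Prop := Z.Passes x y ∧ Z.Passes y x

/-- The edge `{x, y}` is of second type: the zigzag contains the same ordered pair
(`x, y` or `y, x`) twice. -/
def SecondTypeEdge (Z : T.Zigzag) (x y : V) : Prop :=
  Z.PassesTwice x y ∨ Z.PassesTwice y x

/-- The number of positions of the cyclic sequence at which the pair of consecutive
vertices equals `{x, y}` (in either order). -/
noncomputable def passCount (Z : T.Zigzag) (x y : V) : ℕ :=
  Nat.card {i : Fin Z.n //
    (Z.seq ((i : ℕ) : ℤ) = x ∧ Z.seq (((i : ℕ) : ℤ) + 1) = y) ∨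
    (Z.seq ((i : ℕ) : ℤ) = y ∧ Z.seq (((i : ℕ) : ℤ) + 1) = x)}

/-- The number of positions of the cyclic sequence at which the triple of consecutive
vertices has vertex set equal to `F`. -/
noncomputable def faceCount (Z : T.Zigzag) (F : Finset V) : ℕ :=
  Nat.card {i : Fin Z.n //
    ({Z.seq ((i : ℕ) : ℤ), Z.seq (((i : ℕ) : ℤ) + 1), Z.seq (((i : ℕ) : ℤ) + 2)} :
      Finset V) = F}

/-- The three consecutive vertices of the zigzag at position `i` are `x, y, z`. -/
def TripleAt (Z : T.Zigzag) (i : ℤ) (x y z : V) : Prop :=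
  Z.seq i = x ∧ Z.seq (i + 1) = y ∧ Z.seq (i + 2) = z

/-- The zigzag has the cyclic form `x₁,y₁,z₁, …, x₂,y₂,z₂, …, x₃,y₃,z₃, …`:
the three triples occur in this cyclic order within one period. -/
def CyclicTriples (Z : T.Zigzag) (x₁ y₁ z₁ x₂ y₂ z₂ x₃ y₃ z₃ : V) : Prop :=
  ∃ (i : ℤ) (p q : ℕ), 0 < p ∧ p < q ∧ q < Z.n ∧
    Z.TripleAt i x₁ y₁ z₁ ∧ Z.TripleAt (i + p) x₂ y₂ z₂ ∧ Z.TripleAt (i + q) x₃ y₃ z₃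

/-- `F` is a `(1,1,2)`-face: exactly one of its three edges is of second type. -/
def Is112Face (Z : T.Zigzag) (F : Finset V) : Prop :=
  ∃ x y z : V, F = {x, y, z} ∧ x ≠ y ∧ x ≠ z ∧ y ≠ z ∧
    Z.SecondTypeEdge y z ∧ ¬ Z.SecondTypeEdge x y ∧ ¬ Z.SecondTypeEdge x z

/-- `F` is a `(2,2,2)`-face: all three of its edges are of second type. -/
def Is222Face (Z : T.Zigzag) (F : Finset V) : Prop :=
  ∃ x y z : V, F = {x, y, z} ∧ x ≠ y ∧ x ≠ z ∧ y ≠ z ∧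
    Z.SecondTypeEdge x y ∧ Z.SecondTypeEdge y z ∧ Z.SecondTypeEdge x z

/-- `F` is a `(1,1,2)`-face of odd type: with vertices `x, y, z`, where `{y, z}` is the
edge of second type and the zigzag twice passes from `y` to `z`, the zigzag has the
cyclic form `x,y,z, …, y,x,z, …, y,z,x, …`. -/
def Is112OddFace (Z : T.Zigzag) (F : Finset V) : Prop :=
  ∃ x y z : V, F = {x, y, z} ∧ x ≠ y ∧ x ≠ z ∧ y ≠ z ∧
    Z.SecondTypeEdge y z ∧ ¬ Z.SecondTypeEdge x y ∧ ¬ Z.SecondTypeEdge x z ∧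
    Z.PassesTwice y z ∧ Z.CyclicTriples x y z y x z y z x

/-- `F` is a `(1,1,2)`-face of even type: with vertices `x, y, z`, where `{y, z}` is the
edge of second type and the zigzag twice passes from `y` to `z`, the zigzag has the
cyclic form `x,y,z, …, y,z,x, …, y,x,z, …`. -/
def Is112EvenFace (Z : T.Zigzag) (F : Finset V) : Prop :=
  ∃ x y z : V, F = {x, y, z} ∧ x ≠ y ∧ x ≠ z ∧ y ≠ z ∧
    Z.SecondTypeEdge y z ∧ ¬ Z.SecondTypeEdge x y ∧ ¬ Z.SecondTypeEdge x z ∧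
    Z.PassesTwice y z ∧ Z.CyclicTriples x y z y z x y x z

/-- `F` is a `(2,2,2)`-face of first type: with vertices `x, y, z` such that the zigzag
twice passes from `x` to `y`, twice from `y` to `z` and twice from `z` to `x`, the
zigzag has the cyclic form `x,y,z, …, z,x,y, …, y,z,x, …`. -/
def Is222FirstFace (Z : T.Zigzag) (F : Finset V) : Prop :=
  ∃ x y z : V, F = {x, y, z} ∧ x ≠ y ∧ x ≠ z ∧ y ≠ z ∧
    Z.PassesTwice x y ∧ Z.PassesTwice y z ∧ Z.PassesTwice z x ∧
    Z.CyclicTriples x y z z x y y z x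

/-- `F` is a `(2,2,2)`-face of second type: with vertices `x, y, z` such that the zigzag
twice passes from `x` to `y`, twice from `y` to `z` and twice from `z` to `x`, the
zigzag has the cyclic form `x,y,z, …, y,z,x, …, z,x,y, …`. -/
def Is222SecondFace (Z : T.Zigzag) (F : Finset V) : Prop :=
  ∃ x y z : V, F = {x, y, z} ∧ x ≠ y ∧ x ≠ z ∧ y ≠ z ∧
    Z.PassesTwice x y ∧ Z.PassesTwice y z ∧ Z.PassesTwice z x ∧
    Z.CyclicTriples x y z y z x z x y

/-- `a` is the vertex of the face `F` which does not lie on an edge of `F` of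
second type. -/
def IsApex (Z : T.Zigzag) (F : Finset V) (a : V) : Prop :=
  a ∈ F ∧ ∀ y ∈ F, y ≠ a → ¬ Z.SecondTypeEdge a y

end Zigzag

end

section ConnectedSum

variable [DecidableEq V] [DecidableEq V']

/-- The map gluing `Γ'` onto `Γ`: a vertex of `F'` is sent to the corresponding
(under `g`) vertex of `F`, all other vertices of `Γ'` are kept. -/
noncomputable def glueMap [Nonempty V] (F : Finset V) (F' : Finset V') (g : V → V') (y : V') :
    V ⊕ {y : V' // y ∉ F'} :=
  if h : y ∈ F' then Sum.inl (Function.invFunOn g ↑F y) else Sum.inr ⟨y, h⟩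

/-- The connected sum `T #_g T'` of two triangulations along the faces `F` and `F'`,
via the identification `g` of the vertices of `F` with the vertices of `F'`:
the disjoint union of `T` and `T'` in which every vertex `v` of `F` is identified with
`g v` (and the edges of `F` are identified with the corresponding edges of `F'`),
whose faces are all faces of `T` other than `F` together with all faces of `T'`
other than `F'`. -/
noncomputable def connectedSum [Nonempty V] (T : PreTriangulation V) (T' : PreTriangulation V')
    (F : Finset V) (F' : Finset V') (g : V → V') :
    PreTriangulation (V ⊕ {y : V' // y ∉ F'}) where
  graph :=
    { Adj := fun u v => u ≠ v ∧
        ((∃ x y : V, T.graph.Adj x y ∧ u = Sum.inl x ∧ v = Sum.inl y) ∨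
         (∃ x y : V', T'.graph.Adj x y ∧ u = glueMap F F' g x ∧ v = glueMap F F' g y))
      symm := ⟨by
        rintro u v ⟨hne, h⟩
        refine ⟨hne.symm, ?_⟩
        rcases h with ⟨x, y, hxy, hu, hv⟩ | ⟨x, y, hxy, hu, hv⟩
        · exact Or.inl ⟨y, x, hxy.symm, hv, hu⟩
        · exact Or.inr ⟨y, x, hxy.symm, hv, hu⟩⟩
      loopless := ⟨fun u h => h.1 rfl⟩ }
  faces :=
    {G | (∃ A ∈ T.faces, A ≠ F ∧ G = A.image Sum.inl) ∨
         (∃ A ∈ T'.faces, A ≠ F' ∧ G = A.image (glueMap F F' g))}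

end ConnectedSum

/-- `T` and `T'` are isomorphic as graphs together with their collections of faces. -/
def IsIsoTo [DecidableEq V'] (T : PreTriangulation V) (T' : PreTriangulation V') : Prop :=
  ∃ e : V ≃ V', (∀ x y : V, T.graph.Adj x y ↔ T'.graph.Adj (e x) (e y)) ∧
    (∀ G : Finset V, G ∈ T.faces ↔ G.image e ∈ T'.faces)

/-- The bipyramid `BP n`.  The two apices `a, b` are `Sum.inl true, Sum.inl false`;
the vertices `1, …, n` of the `n`-gon are `Sum.inr 0, …, Sum.inr (n-1)` (that is, the
paper's vertex `i` is `Sum.inr (i - 1)`). -/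
def bp (n : ℕ) : PreTriangulation (Bool ⊕ ZMod n) where
  graph :=
    { Adj := fun u v =>
        match u, v with
        | Sum.inl _, Sum.inl _ => False
        | Sum.inl _, Sum.inr _ => True
        | Sum.inr _, Sum.inl _ => True
        | Sum.inr i, Sum.inr j => i ≠ j ∧ (j = i + 1 ∨ i = j + 1)
      symm := ⟨by
        rintro (s | i) (t | j) h
        · exact h.elim
        · trivial
        · trivial
        · exact ⟨h.1.symm, h.2.symm⟩⟩
      loopless := ⟨by
        rintro (s | i) h
        · exact h
        · exact h.1 rfl⟩ }
  faces := {G | ∃ (s : Bool) (i : ZMod n), G = {Sum.inl s, Sum.inr i, Sum.inr (i + 1)}}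

/-- The complete graph on four vertices regarded as a combinatorial triangulation whose
faces are all four 3-element vertex subsets. -/
def k4 : PreTriangulation (Fin 4) where
  graph := ⊤
  faces := {G | G.card = 3}

/-- The cyclic sequence `a, 1+c, 2+c, b, 3+c, 4+c, …, a, n-1+c, n+c, b, 1+c, 2+c, a, 3+c, 4+c,
…, b, n-1+c, n+c` in the bipyramid `BP n` (for `n` even), of length `3 n`, written in the
paper's labels; `c` is an offset.  Here `a = Sum.inl true`, `b = Sum.inl false` and the
paper's vertex `i` is `Sum.inr (i - 1)`. -/
def bpZigSeq (n : ℕ) (c : ZMod n) : ℤ → Bool ⊕ ZMod n := fun i =>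
  let j : ℕ := (i % (3 * (n : ℤ))).toNat
  if j % 3 = 0 then Sum.inl (decide (j / 3 % 2 = 0))
  else Sum.inr (((2 * (j / 3) + (if j % 3 = 1 then 0 else 1) : ℕ) : ZMod n) + c)

end PreTriangulation

/-! Write the zigzag of `Γ` as `x,y,z, A, y,z,x, B, z,x,y, C`. A zigzag is determined by one
flag (a directed edge together with the face ahead of it) and cannot be its own reverse, so it
meets `F` only at these three places. Hence `y,z,A,y,z`, `z,x,B,z,x` and `x,y,C,x,y` are
stretches that start and end with the same directed edge and avoid `F`, and reversing them gives
such stretches for the three opposite directed edges; the same holds for `F'` in `Γ'`. In the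
connected sum, the stretch of `Γ` starting with `u,w` closes up with the stretch of `Γ'`
starting with `g u, g w` into a zigzag which passes between the two sides only through the edge
`u,w`. Doing this for `y,z` and for `z,x` gives two zigzags which are not equivalent, because an
equivalence would match these two edges. -/

open Function

namespace PreTriangulation

section Zigzags

variable {V : Type u} [DecidableEq V] {T : PreTriangulation V}

lemma IsTriangulation.face_eq_of_ne (hT : T.IsTriangulation) {u v : V}
    (huv : T.graph.Adj u v) {A B C : Finset V} (hA : A ∈ T.faces ∧ u ∈ A ∧ v ∈ A)
    (hB : B ∈ T.faces ∧ u ∈ B ∧ v ∈ B) (hC : C ∈ T.faces ∧ u ∈ C ∧ v ∈ C)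
    (hBA : B ≠ A) (hCA : C ≠ A) : B = C := by
  obtain ⟨D, E, -, hDE⟩ := Set.ncard_eq_two.mp (hT.edge_in_two_faces u v huv)
  have mem : ∀ G, G ∈ T.faces ∧ u ∈ G ∧ v ∈ G → G = D ∨ G = E := fun G hG => by
    simpa [hDE] using (show G ∈ {G | G ∈ T.faces ∧ u ∈ G ∧ v ∈ G} from hG)
  rcases mem A hA with rfl | rfl <;> rcases mem B hB with rfl | rfl <;>
    rcases mem C hC with rfl | rfl <;> tauto

namespace Zigzag

variable (Z : T.Zigzag)

lemma seq_mem_face {i j : ℤ} (h₁ : i ≤ j) (h₂ : j ≤ i + 2) : Z.seq j ∈ Z.face i := by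
  obtain h | h | h : j = i ∨ j = i + 1 ∨ j = i + 2 := by omega
  all_goals rw [h]; exact Z.subset_face i (by simp)

lemma face_pred_ne (i : ℤ) : Z.face (i - 1) ≠ Z.face i := by
  simpa using Z.face_ne (i - 1)

lemma seq_add_two_ne (i : ℤ) : Z.seq (i + 2) ≠ Z.seq i := by
  intro h
  refine Z.face_pred_ne i (Z.face_unique i _ (Z.face_mem (i - 1)) ?_)
  intro w hw
  simp only [Finset.mem_insert, Finset.mem_singleton, h] at hw
  rcases hw with rfl | rfl | rfl <;> exact Z.seq_mem_face (by omega) (by omega)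

lemma seq_succ_ne_add_two (i : ℤ) : Z.seq (i + 1) ≠ Z.seq (i + 2) := by
  simpa [add_assoc] using Z.seq_ne (i + 1)

lemma card_triple (i : ℤ) : ({Z.seq i, Z.seq (i + 1), Z.seq (i + 2)} : Finset V).card = 3 :=
  Finset.card_eq_three.mpr
    ⟨_, _, _, Z.seq_ne i, (Z.seq_add_two_ne i).symm, Z.seq_succ_ne_add_two i, rfl⟩

lemma face_eq_triple (hT : T.IsTriangulation) (i : ℤ) :
    Z.face i = {Z.seq i, Z.seq (i + 1), Z.seq (i + 2)} :=
  (Finset.eq_of_subset_of_card_le (Z.subset_face i)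
    (by rw [Z.card_triple, hT.face_card _ (Z.face_mem i)])).symm

lemma face_eq_of_tripleAt (hT : T.IsTriangulation) {i : ℤ} {x y z : V}
    (h : Z.TripleAt i x y z) : Z.face i = {x, y, z} := by
  rw [Z.face_eq_triple hT, h.1, h.2.1, h.2.2]

lemma face_add_n (t : ℤ) : Z.face (t + Z.n) = Z.face t := by
  refine Z.face_unique t _ (Z.face_mem (t + Z.n)) ?_
  intro w hw
  simp only [Finset.mem_insert, Finset.mem_singleton] at hw
  rcases hw with rfl | rfl | rfl
  · rw [← Z.periodic t]; exact Z.seq_mem_face (by omega) (by omega)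
  · rw [← Z.periodic (t + 1)]; exact Z.seq_mem_face (by omega) (by omega)
  · rw [← Z.periodic (t + 2)]; exact Z.seq_mem_face (by omega) (by omega)

lemma dvd_of_periodic {m : ℤ} (hm : Periodic Z.seq m) : (Z.n : ℤ) ∣ m := by
  have hn : (0 : ℤ) < Z.n := by have := Z.three_lt_n; omega
  have hmod : Periodic Z.seq (m % Z.n) := by
    rw [Int.emod_def, mul_comm]
    exact hm.sub_period ((show Periodic Z.seq (Z.n : ℤ) from Z.periodic).int_mul _)
  by_contra hdvd
  have hpos : 0 < m % Z.n :=
    lt_of_le_of_ne (Int.emod_nonneg _ hn.ne') fun h => hdvd (Int.dvd_of_emod_eq_zero h.symm)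
  have hle := Z.n_minimal (m % Z.n).toNat (by omega)
    (by rw [Int.toNat_of_nonneg hpos.le]; exact hmod)
  have := Int.emod_lt_of_pos m hn
  omega

def rev : T.Zigzag where
  n := Z.n
  three_lt_n := Z.three_lt_n
  seq t := Z.seq (-t)
  periodic i := by simpa [neg_add] using (Z.periodic (-(i + Z.n))).symm
  n_minimal m hm h := Z.n_minimal m hm fun s => by simpa [neg_add] using (h (-(s + m))).symm
  seq_ne i := by simpa [neg_add] using (Z.seq_ne (-(i + 1))).symm
  seq_adj i := by simpa [neg_add] using (Z.seq_adj (-(i + 1))).symm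
  face t := Z.face (-t - 2)
  face_mem _ := Z.face_mem _
  subset_face i := by
    intro w hw
    simp only [Finset.mem_insert, Finset.mem_singleton] at hw
    rcases hw with rfl | rfl | rfl <;> exact Z.seq_mem_face (by omega) (by omega)
  face_unique i G hG hsub := by
    refine Z.face_unique (-i - 2) G hG fun w hw => hsub ?_
    simp only [Finset.mem_insert, Finset.mem_singleton] at hw ⊢
    rcases hw with rfl | rfl | rfl
    · exact .inr (.inr (by ring_nf))
    · exact .inr (.inl (by ring_nf))
    · exact .inl (by ring_nf)
  face_ne i := by
    have h := Z.face_ne (-(i + 1) - 2)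
    rw [show -(i + 1) - 2 + 1 = -i - 2 by ring] at h
    exact h.symm

@[simp] lemma rev_seq (t : ℤ) : Z.rev.seq t = Z.seq (-t) := rfl

@[simp] lemma rev_face (t : ℤ) : Z.rev.face t = Z.face (-t - 2) := rfl

def FlagEq (Z Z' : T.Zigzag) (i j : ℤ) : Prop :=
  Z.seq i = Z'.seq j ∧ Z.seq (i + 1) = Z'.seq (j + 1) ∧ Z.face i = Z'.face j

variable {Z} {Z' : T.Zigzag} {i j : ℤ}

lemma FlagEq.succ (hT : T.IsTriangulation) (h : FlagEq Z Z' i j) :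
    FlagEq Z Z' (i + 1) (j + 1) := by
  obtain ⟨h₀, h₁, hf⟩ := h
  have h₂ : Z.seq (i + 2) = Z'.seq (j + 2) := by
    have hmem : Z.seq (i + 2) ∈ Z'.face j := hf ▸ Z.seq_mem_face (by omega) le_rfl
    rw [Z'.face_eq_triple hT, ← h₀, ← h₁] at hmem
    simp only [Finset.mem_insert, Finset.mem_singleton] at hmem
    rcases hmem with h | h | h
    · exact absurd h (Z.seq_add_two_ne i)
    · exact absurd h.symm (Z.seq_succ_ne_add_two i)
    · exact h
  refine ⟨h₁, by simpa [add_assoc] using h₂, hT.face_eq_of_ne (Z.seq_adj (i + 1))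
    ⟨Z.face_mem i, Z.seq_mem_face (by omega) (by omega), ?_⟩ ⟨Z.face_mem _, ?_, ?_⟩
    ⟨Z'.face_mem _, ?_, ?_⟩ (Z.face_ne i).symm ?_⟩
  · simpa [add_assoc] using Z.seq_mem_face (i := i) (j := i + 2) (by omega) le_rfl
  · exact Z.seq_mem_face le_rfl (by omega)
  · simpa [add_assoc] using Z.seq_mem_face (i := i + 1) (j := i + 2) (by omega) (by omega)
  · exact h₁ ▸ Z'.seq_mem_face le_rfl (by omega)
  · simpa [add_assoc, h₂] using Z'.seq_mem_face (i := j + 1) (j := j + 2) (by omega) (by omega)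
  · exact hf ▸ (Z'.face_ne j).symm

lemma FlagEq.pred (hT : T.IsTriangulation) (h : FlagEq Z Z' i j) :
    FlagEq Z Z' (i - 1) (j - 1) := by
  obtain ⟨h₀, h₁, hf⟩ := h
  have hf' : Z.face (i - 1) = Z'.face (j - 1) :=
    hT.face_eq_of_ne (Z.seq_adj i) ⟨Z.face_mem i, Z.seq_mem_face le_rfl (by omega),
      Z.seq_mem_face (by omega) (by omega)⟩
      ⟨Z.face_mem _, Z.seq_mem_face (by omega) (by omega), Z.seq_mem_face (by omega) (by omega)⟩
      ⟨Z'.face_mem _, h₀ ▸ Z'.seq_mem_face (by omega) (by omega),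
        h₁ ▸ Z'.seq_mem_face (by omega) (by omega)⟩
      (Z.face_pred_ne i) (hf ▸ Z'.face_pred_ne j)
  refine ⟨?_, by simpa using h₀, hf'⟩
  have hmem : Z.seq (i - 1) ∈ Z'.face (j - 1) := hf' ▸ Z.seq_mem_face le_rfl (by omega)
  rw [Z'.face_eq_triple hT, sub_add_cancel, show j - 1 + 2 = j + 1 by ring, ← h₀, ← h₁]
    at hmem
  simp only [Finset.mem_insert, Finset.mem_singleton] at hmem
  rcases hmem with h | h | h
  · exact h
  · exact absurd h (by simpa using Z.seq_ne (i - 1))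
  · exact absurd h.symm (by simpa [sub_add] using Z.seq_add_two_ne (i - 1))

lemma FlagEq.seq_add (hT : T.IsTriangulation) (h : FlagEq Z Z' i j) (t : ℤ) :
    Z.seq (i + t) = Z'.seq (j + t) := by
  suffices FlagEq Z Z' (i + t) (j + t) from this.1
  induction t using Int.induction_on with
  | zero => simpa using h
  | succ k ih => rw [← add_assoc, ← add_assoc]; exact ih.succ hT
  | pred k ih => rw [← add_sub_assoc, ← add_sub_assoc]; exact ih.pred hT

lemma FlagEq.dvd_sub (hT : T.IsTriangulation) (h : FlagEq Z Z i j) : (Z.n : ℤ) ∣ j - i :=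
  Z.dvd_of_periodic fun s => by
    have h' := (h.seq_add hT (s - i)).symm
    rwa [show i + (s - i) = s by ring, show j + (s - i) = s + (j - i) by ring] at h'

variable (Z)

lemma not_forall_seq_eq_seq_sub (k : ℤ) : ¬ ∀ t, Z.seq t = Z.seq (k - t) := by
  intro hk
  obtain ⟨u, rfl | rfl⟩ := Int.even_or_odd' k
  · exact Z.seq_add_two_ne (u - 1) ((hk _).trans (congrArg Z.seq (by ring)))
  · refine Z.face_pred_ne u (Z.face_unique u _ (Z.face_mem (u - 1)) fun w hw => ?_)
    simp only [Finset.mem_insert, Finset.mem_singleton] at hw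
    rcases hw with rfl | rfl | rfl
    · exact Z.seq_mem_face (by omega) (by omega)
    · exact Z.seq_mem_face (by omega) (by omega)
    · rw [hk, show 2 * u + 1 - (u + 2) = u - 1 by ring]
      exact Z.seq_mem_face le_rfl (by omega)

/-- Otherwise the two traversals give a common flag of `Z` and its reverse, and `Z` would be its
own reverse. -/
lemma face_eq_of_reverse_pass (hT : T.IsTriangulation) {a b : ℤ}
    (h₁ : Z.seq b = Z.seq (a + 1)) (h₂ : Z.seq (b + 1) = Z.seq a) : Z.face a = Z.face b := by
  by_contra hne
  have hface : Z.face a = Z.face (b - 1) :=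
    hT.face_eq_of_ne (Z.seq_adj a)
      ⟨Z.face_mem b, h₂ ▸ Z.seq_mem_face (by omega) (by omega),
        h₁ ▸ Z.seq_mem_face le_rfl (by omega)⟩
      ⟨Z.face_mem a, Z.seq_mem_face le_rfl (by omega), Z.seq_mem_face (by omega) (by omega)⟩
      ⟨Z.face_mem _, h₂ ▸ Z.seq_mem_face (by omega) (by omega),
        h₁ ▸ Z.seq_mem_face (by omega) (by omega)⟩
      hne (Z.face_pred_ne b)
  have hflag : FlagEq Z Z.rev a (-b - 1) :=
    ⟨by rw [rev_seq, show -(-b - 1) = b + 1 by ring, h₂],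
      by rw [rev_seq, show -(-b - 1 + 1) = b by ring, h₁],
      by rw [rev_face, show -(-b - 1) - 2 = b - 1 by ring, hface]⟩
  refine Z.not_forall_seq_eq_seq_sub (a + b + 1) fun s => ?_
  simpa [show -(-b - 1 + (s - a)) = a + b + 1 - s by ring] using hflag.seq_add hT (s - a)

lemma not_reverse_of_face_eq (hT : T.IsTriangulation) {j t : ℤ} (hf : Z.face t = Z.face j)
    (h₀ : Z.seq t = Z.seq (j + 2)) (h₁ : Z.seq (t + 1) = Z.seq (j + 1)) : False :=
  Z.face_ne j <| hf.symm.trans (Z.face_eq_of_reverse_pass hT (a := j + 1) (b := t)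
    (by rw [h₀, add_assoc, one_add_one_eq_two]) h₁).symm

section CyclicTriples

variable (hT : T.IsTriangulation) {x y z : V} {i : ℤ} {p q : ℕ}
  (h₁ : Z.TripleAt i x y z) (h₂ : Z.TripleAt (i + p) y z x) (h₃ : Z.TripleAt (i + q) z x y)
include hT h₁ h₂ h₃

/-- Any other visit to the face would traverse one of its edges along a flag already used, or
backwards. -/
lemma dvd_sub_of_face_eq {t : ℤ} (ht : Z.face t = {x, y, z}) :
    (Z.n : ℤ) ∣ t - i ∨ (Z.n : ℤ) ∣ t - (i + p) ∨ (Z.n : ℤ) ∣ t - (i + q) := by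
  have hf₁ : Z.face i = Z.face t := (Z.face_eq_of_tripleAt hT h₁).trans ht.symm
  have hf₂ : Z.face (i + p) = Z.face t :=
    ((Z.face_eq_of_tripleAt hT h₂).trans (by ext; simp; tauto)).trans ht.symm
  have hf₃ : Z.face (i + q) = Z.face t :=
    ((Z.face_eq_of_tripleAt hT h₃).trans (by ext; simp; tauto)).trans ht.symm
  have m₀ : Z.seq t ∈ ({x, y, z} : Finset V) := ht ▸ Z.seq_mem_face le_rfl (by omega)
  have m₁ : Z.seq (t + 1) ∈ ({x, y, z} : Finset V) :=
    ht ▸ Z.seq_mem_face (by omega) (by omega)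
  simp only [Finset.mem_insert, Finset.mem_singleton] at m₀ m₁
  rcases m₀ with h | h | h <;> rcases m₁ with h' | h' | h'
  · exact absurd (h.trans h'.symm) (Z.seq_ne t)
  · exact .inl (FlagEq.dvd_sub hT ⟨h₁.1.trans h.symm, h₁.2.1.trans h'.symm, hf₁⟩)
  · exact (Z.not_reverse_of_face_eq hT hf₂.symm (h.trans h₂.2.2.symm)
      (h'.trans h₂.2.1.symm)).elim
  · exact (Z.not_reverse_of_face_eq hT hf₃.symm (h.trans h₃.2.2.symm)
      (h'.trans h₃.2.1.symm)).elim
  · exact absurd (h.trans h'.symm) (Z.seq_ne t)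
  · exact .inr (.inl (FlagEq.dvd_sub hT ⟨h₂.1.trans h.symm, h₂.2.1.trans h'.symm, hf₂⟩))
  · exact .inr (.inr (FlagEq.dvd_sub hT ⟨h₃.1.trans h.symm, h₃.2.1.trans h'.symm, hf₃⟩))
  · exact (Z.not_reverse_of_face_eq hT hf₁.symm (h.trans h₁.2.2.symm)
      (h'.trans h₁.2.1.symm)).elim
  · exact absurd (h.trans h'.symm) (Z.seq_ne t)

lemma face_add_ne (hp : 0 < p) (hpq : p < q) (hqn : q < Z.n) (r : ℤ) (hr₀ : 0 < r)
    (hrn : r < Z.n) (hrp : r ≠ p) (hrq : r ≠ q) : Z.face (i + r) ≠ {x, y, z} := by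
  intro h
  have small : ∀ {d : ℤ}, (Z.n : ℤ) ∣ d → |d| < Z.n → d = 0 := Int.eq_zero_of_abs_lt_dvd
  rcases Z.dvd_sub_of_face_eq hT h₁ h₂ h₃ h with h | h | h
  · have := small h (abs_lt.mpr ⟨by omega, by omega⟩); omega
  · have := small h (abs_lt.mpr ⟨by omega, by omega⟩); omega
  · have := small h (abs_lt.mpr ⟨by omega, by omega⟩); omega

end CyclicTriples

/-- In a connected sum along `F`, such a stretch closes up with one of the other triangulation
(see `gluedSeq`). -/
structure IsExcursion (F : Finset V) (a : ℤ) (l : ℕ) : Prop where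
  three_le : 3 ≤ l
  seq_last : Z.seq (a + l - 1) = Z.seq a
  seq_last_succ : Z.seq (a + l) = Z.seq (a + 1)
  face_ne : ∀ r : ℤ, 0 ≤ r → r ≤ l - 2 → Z.face (a + r) ≠ F

variable {Z} in
lemma IsExcursion.rev {F : Finset V} {a : ℤ} {l : ℕ} (h : Z.IsExcursion F a l) :
    Z.rev.IsExcursion F (-(a + l)) l where
  three_le := h.three_le
  seq_last := by
    simp only [rev_seq]
    rw [show -(-(a + l) + l - 1) = a + 1 by ring, neg_neg, h.seq_last_succ]
  seq_last_succ := by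
    simp only [rev_seq]
    rw [show -(-(a + l) + l) = a by ring, show -(-(a + l) + 1) = a + l - 1 by ring, h.seq_last]
  face_ne r h₀ hr := by
    rw [rev_face, show -(-(a + l) + r) - 2 = a + (l - 2 - r) by ring]
    exact h.face_ne (l - 2 - r) (by omega) (by omega)

end Zigzag

def HasExcursion (T : PreTriangulation V) (F : Finset V) (u w : V) : Prop :=
  ∃ (Z : T.Zigzag) (a : ℤ) (l : ℕ), Z.IsExcursion F a l ∧ Z.seq a = u ∧ Z.seq (a + 1) = w

lemma HasExcursion.symm {F : Finset V} {u w : V} (h : T.HasExcursion F u w) :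
    T.HasExcursion F w u := by
  obtain ⟨Z, a, l, hZ, hu, hw⟩ := h
  refine ⟨Z.rev, _, l, hZ.rev, ?_, ?_⟩
  · rw [Zigzag.rev_seq, neg_neg, hZ.seq_last_succ, hw]
  · rw [Zigzag.rev_seq, show -(-(a + l) + 1) = a + l - 1 by ring, hZ.seq_last, hu]

lemma Zigzag.hasExcursion_of_face_eq (Z : T.Zigzag) {F : Finset V} {j : ℤ} {d : ℕ} (hd : 0 < d)
    (hj : Z.face j = F) (hjd : Z.face (j + d) = F) (hs : Z.seq (j + d) = Z.seq (j + 1))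
    (hs' : Z.seq (j + d + 1) = Z.seq (j + 2))
    (hfree : ∀ r : ℤ, 0 < r → r < d → Z.face (j + r) ≠ F) :
    T.HasExcursion F (Z.seq (j + 1)) (Z.seq (j + 2)) := by
  refine ⟨Z, j + 1, d, ⟨?_, ?_, ?_, ?_⟩, rfl, by rw [add_assoc, one_add_one_eq_two]⟩
  · obtain rfl | rfl | h : d = 1 ∨ d = 2 ∨ 3 ≤ d := by omega
    · exact absurd (hj.trans hjd.symm) (by simpa using Z.face_ne j)
    · exact absurd hs.symm (by simpa using Z.seq_succ_ne_add_two j)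
    · exact h
  · rw [show j + 1 + d - 1 = j + d by ring, hs]
  · rw [show j + 1 + (d : ℤ) = j + d + 1 by ring, hs', add_assoc, one_add_one_eq_two]
  · intro r h₀ hr
    simpa [add_assoc] using hfree (1 + r) (by omega) (by omega)

lemma Zigzag.Is222SecondFace.hasExcursion (hT : T.IsTriangulation) {Z : T.Zigzag}
    {F : Finset V} (h : Z.Is222SecondFace F) {u w : V} (hu : u ∈ F) (hw : w ∈ F)
    (huw : u ≠ w) : T.HasExcursion F u w := by
  obtain ⟨x, y, z, rfl, -, -, -, -, -, -, i, p, q, hp, hpq, hqn, h₁, h₂, h₃⟩ := h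
  have hfree := Z.face_add_ne hT h₁ h₂ h₃ hp hpq hqn
  have hf₁ := Z.face_eq_of_tripleAt hT h₁
  have hf₂ : Z.face (i + p) = {x, y, z} :=
    (Z.face_eq_of_tripleAt hT h₂).trans (by ext; simp; tauto)
  have hf₃ : Z.face (i + q) = {x, y, z} :=
    (Z.face_eq_of_tripleAt hT h₃).trans (by ext; simp; tauto)
  have e_yz : T.HasExcursion {x, y, z} y z := by
    have e := Z.hasExcursion_of_face_eq hp hf₁ hf₂ (by rw [h₂.1, h₁.2.1])
      (by rw [h₂.2.1, h₁.2.2]) fun r h₀ hr => hfree r h₀ (by omega) (by omega) (by omega)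
    rwa [h₁.2.1, h₁.2.2] at e
  have e_zx : T.HasExcursion {x, y, z} z x := by
    have hd : i + p + ((q - p : ℕ) : ℤ) = i + q := by omega
    have e := Z.hasExcursion_of_face_eq (d := q - p) (by omega) hf₂ (by rwa [hd])
      (by rw [hd, h₃.1, h₂.2.1]) (by rw [hd, h₃.2.1, h₂.2.2])
      fun r h₀ hr => by rw [add_assoc]; exact hfree _ (by omega) (by omega) (by omega) (by omega)
    rwa [h₂.2.1, h₂.2.2] at e
  have e_xy : T.HasExcursion {x, y, z} x y := by
    have hd : i + q + ((Z.n - q : ℕ) : ℤ) = i + Z.n := by omega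
    have e := Z.hasExcursion_of_face_eq (d := Z.n - q) (by omega) hf₃
      (by rw [hd, Z.face_add_n, hf₁]) (by rw [hd, Z.periodic, h₁.1, h₃.2.1])
      (by rw [hd, add_right_comm, Z.periodic, h₁.2.1, h₃.2.2])
      fun r h₀ hr => by rw [add_assoc]; exact hfree _ (by omega) (by omega) (by omega) (by omega)
    rwa [h₃.2.1, h₃.2.2] at e
  simp only [Finset.mem_insert, Finset.mem_singleton] at hu hw
  rcases hu with rfl | rfl | rfl <;> rcases hw with rfl | rfl | rfl
  all_goals first | exact absurd rfl huw | assumption | exact HasExcursion.symm ‹_›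

end Zigzags

section Windows

variable {X : Type*} [DecidableEq X] {S : PreTriangulation X}

def window (s : ℤ → X) (t : ℤ) : Finset X := {s t, s (t + 1), s (t + 2)}

def Zigzag.ofWindows (hcard : ∀ G ∈ S.faces, G.card = 3)
    (hadj : ∀ G ∈ S.faces, ∀ x ∈ G, ∀ y ∈ G, x ≠ y → S.graph.Adj x y)
    (s : ℤ → X) (N : ℕ) (hN : 3 < N) (hper : Periodic s N)
    (hmin : ∀ m : ℕ, 0 < m → Periodic s m → N ≤ m) (hmem : ∀ t, window s t ∈ S.faces)
    (hne : ∀ t, window s t ≠ window s (t + 1)) : S.Zigzag :=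
  have hseq_ne : ∀ t, s t ≠ s (t + 1) := fun t h => by
    have := hcard _ (hmem t)
    rw [window, h, Finset.insert_eq_of_mem (by simp)] at this
    exact absurd (Finset.card_le_two.trans_eq' this) (by norm_num)
  { n := N
    three_lt_n := hN
    seq := s
    periodic := hper
    n_minimal := hmin
    seq_ne := hseq_ne
    seq_adj := fun t => hadj _ (hmem t) _ (by simp [window]) _ (by simp [window]) (hseq_ne t)
    face := window s
    face_mem := hmem
    subset_face := fun _ => subset_rfl
    face_unique := fun t G hG h =>
      (Finset.eq_of_subset_of_card_le h (by rw [hcard G hG]; exact (hcard _ (hmem t)).ge)).symm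
    face_ne := hne }

def Zigzag.Crosses (C : S.Zigzag) (P : Finset X → Prop) (t : ℤ) : Prop :=
  ¬ (P (C.face t) ↔ P (C.face (t + 1)))

lemma Zigzag.face_eq_of_subset {C D : S.Zigzag} {s t : ℤ}
    (h : ({D.seq s, D.seq (s + 1), D.seq (s + 2)} : Finset X) ⊆
      {C.seq t, C.seq (t + 1), C.seq (t + 2)}) : D.face s = C.face t :=
  (D.face_unique s _ (C.face_mem t) (h.trans (C.subset_face t))).symm

lemma ZigzagEquiv.seq_of_crosses {C D : S.Zigzag} (h : ZigzagEquiv C D) {P : Finset X → Prop}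
    {u w : X} (hC : ∀ t, C.Crosses P t → C.seq (t + 1) = u ∧ C.seq (t + 2) = w) {t : ℤ}
    (ht : D.Crosses P t) :
    (D.seq (t + 1) = u ∧ D.seq (t + 2) = w) ∨ (D.seq (t + 1) = w ∧ D.seq (t + 2) = u) := by
  rcases h with ⟨k, hk⟩ | ⟨k, hk⟩
  · have hface : ∀ s, D.face s = C.face (s + k) := fun s =>
      Zigzag.face_eq_of_subset (by
        rw [hk, hk, hk, add_right_comm s 1, add_right_comm s 2])
    have := hC (t + k) (by
      rwa [Zigzag.Crosses, ← hface, add_right_comm, ← hface])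
    left
    rw [hk, hk, add_right_comm t 1, add_right_comm t 2]
    exact this
  · have hface : ∀ s, D.face s = C.face (k - s - 2) := fun s =>
      Zigzag.face_eq_of_subset (by
        rw [hk, hk, hk, show k - s - 2 + 1 = k - (s + 1) by ring,
          show k - s - 2 + 2 = k - s by ring, show k - s - 2 = k - (s + 2) by ring]
        intro x hx
        simp only [Finset.mem_insert, Finset.mem_singleton] at hx ⊢
        tauto)
    have := hC (k - t - 3) (by
      rw [Zigzag.Crosses, show k - t - 3 = k - (t + 1) - 2 by ring, ← hface,
        show k - (t + 1) - 2 + 1 = k - t - 2 by ring, ← hface]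
      exact fun h' => ht h'.symm)
    right
    rw [hk, hk, show k - (t + 1) = k - t - 3 + 2 by ring, show k - (t + 2) = k - t - 3 + 1 by ring]
    exact this.symm

end Windows

section ConnectedSum

variable {V : Type u} {V' : Type v} [DecidableEq V'] [Nonempty V] {F : Finset V} {F' : Finset V'}
  {g : V → V'}

lemma glueMap_apply_of_mem (hg : Set.BijOn g F F') {v : V} (hv : v ∈ F) :
    glueMap F F' g (g v) = Sum.inl v := by
  have hv' : v ∈ (F : Set V) := hv
  rw [glueMap, dif_pos (show g v ∈ F' from hg.mapsTo hv'), hg.injOn.leftInvOn_invFunOn hv']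

lemma glueMap_injective (hg : Set.BijOn g F F') : Injective (glueMap F F' g) := by
  intro y₁ y₂ h
  by_cases h₁ : y₁ ∈ F' <;> by_cases h₂ : y₂ ∈ F' <;> simp [glueMap, h₁, h₂] at h
  · rw [← hg.invOn_invFunOn.2 (show y₁ ∈ (F' : Set V') from h₁),
      ← hg.invOn_invFunOn.2 (show y₂ ∈ (F' : Set V') from h₂), h]
  · exact h

variable [DecidableEq V] {T : PreTriangulation V} {T' : PreTriangulation V'}

lemma connectedSum_face_card (hT : T.IsTriangulation) (hT' : T'.IsTriangulation)
    (hg : Set.BijOn g F F') {G : Finset _} (hG : G ∈ (connectedSum T T' F F' g).faces) :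
    G.card = 3 := by
  rcases hG with ⟨A, hA, -, rfl⟩ | ⟨A, hA, -, rfl⟩
  · rw [Finset.card_image_of_injective _ Sum.inl_injective, hT.face_card A hA]
  · rw [Finset.card_image_of_injective _ (glueMap_injective hg), hT'.face_card A hA]

lemma connectedSum_adj_of_mem_face (hT : T.IsTriangulation) (hT' : T'.IsTriangulation)
    {G : Finset _} (hG : G ∈ (connectedSum T T' F F' g).faces)
    {u : V ⊕ {y : V' // y ∉ F'}} (hu : u ∈ G) {w : V ⊕ {y : V' // y ∉ F'}} (hw : w ∈ G)
    (huw : u ≠ w) : (connectedSum T T' F F' g).graph.Adj u w := by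
  refine ⟨huw, ?_⟩
  rcases hG with ⟨A, hA, -, rfl⟩ | ⟨A, hA, -, rfl⟩
  · obtain ⟨x, hx, rfl⟩ := Finset.mem_image.mp hu
    obtain ⟨y, hy, rfl⟩ := Finset.mem_image.mp hw
    exact .inl ⟨x, y, hT.face_adj A hA x hx y hy (fun h => huw (h ▸ rfl)), rfl, rfl⟩
  · obtain ⟨x, hx, rfl⟩ := Finset.mem_image.mp hu
    obtain ⟨y, hy, rfl⟩ := Finset.mem_image.mp hw
    exact .inr ⟨x, y, hT'.face_adj A hA x hx y hy (fun h => huw (h ▸ rfl)), rfl, rfl⟩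

lemma toRight_image_inl (A : Finset V) :
    (A.image (Sum.inl : V → V ⊕ {y : V' // y ∉ F'})).toRight = ∅ := by
  ext; simp

lemma toRight_image_glueMap_nonempty (hT' : T'.IsTriangulation) (hF' : F' ∈ T'.faces)
    {A : Finset V'} (hA : A ∈ T'.faces) (hAF : A ≠ F') :
    (A.image (glueMap F F' g)).toRight.Nonempty := by
  obtain ⟨y, hyA, hyF⟩ : ∃ y ∈ A, y ∉ F' := by
    by_contra! h
    exact hAF (Finset.eq_of_subset_of_card_le h (by rw [hT'.face_card A hA, hT'.face_card F' hF']))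
  exact ⟨⟨y, hyF⟩, Finset.mem_toRight.mpr
    (Finset.mem_image.mpr ⟨y, hyA, by simp [glueMap, hyF]⟩)⟩

end ConnectedSum

section Gluing

variable {V : Type u} {V' : Type v} [DecidableEq V] [DecidableEq V'] [Nonempty V]
  {T : PreTriangulation V} {T' : PreTriangulation V'} {F : Finset V} {F' : Finset V'}
  {g : V → V'} {W : T.Zigzag} {W' : T'.Zigzag} {a a' : ℤ} {l l' : ℕ}

/-- The closed walk of the connected sum running along `W.seq a, …, W.seq (a + l - 1)` and then
along `W'.seq (a' + 1), …, W'.seq (a' + l' - 2)`, with period `l + l' - 2`. -/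
noncomputable def gluedSeq (F : Finset V) (F' : Finset V') (g : V → V') (W : T.Zigzag)
    (W' : T'.Zigzag) (a a' : ℤ) (l l' : ℕ) (t : ℤ) : V ⊕ {y : V' // y ∉ F'} :=
  if t % (l + l' - 2 : ℕ) < l then Sum.inl (W.seq (a + t % (l + l' - 2 : ℕ)))
  else glueMap F F' g (W'.seq (a' + (t % (l + l' - 2 : ℕ) - l + 1)))

lemma exists_eq_add_mul (t : ℤ) {N : ℕ} (hN : 0 < N) :
    ∃ r k : ℤ, 0 ≤ r ∧ r < N ∧ t = r + N * k :=
  ⟨t % N, t / N, Int.emod_nonneg _ (by omega), Int.emod_lt_of_pos _ (by omega),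
    (Int.emod_add_mul_ediv t N).symm⟩

lemma gluedSeq_periodic :
    Periodic (gluedSeq F F' g W W' a a' l l') ((l + l' - 2 : ℕ) : ℤ) := fun t => by
  simp only [gluedSeq, Int.add_emod_right]

variable (F F' g W W' a a' l l') in
structure GluableExcursions : Prop where
  left : W.IsExcursion F a l
  right : W'.IsExcursion F' a' l'
  glue_start : glueMap F F' g (W'.seq a') = Sum.inl (W.seq a)
  glue_start_succ : glueMap F F' g (W'.seq (a' + 1)) = Sum.inl (W.seq (a + 1))

namespace GluableExcursions

variable (h : GluableExcursions F F' g W W' a a' l l')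
include h

lemma gluedSeq_left (k : ℤ) {r : ℤ} (hr₀ : 0 ≤ r) (hr : r ≤ l) :
    gluedSeq F F' g W W' a a' l l' (r + (l + l' - 2 : ℕ) * k) = Sum.inl (W.seq (a + r)) := by
  have := h.right.three_le
  rw [gluedSeq, Int.add_mul_emod_self_left, Int.emod_eq_of_lt hr₀ (by omega)]
  split_ifs with hr'
  · rfl
  · obtain rfl : r = l := by omega
    rw [show (l : ℤ) - l + 1 = 1 by ring, h.glue_start_succ, h.left.seq_last_succ]

lemma gluedSeq_right (k : ℤ) {r : ℤ} (hr₀ : l - 1 ≤ r) (hr : r ≤ (l + l' - 2 : ℕ) + 1) :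
    gluedSeq F F' g W W' a a' l l' (r + (l + l' - 2 : ℕ) * k) =
      glueMap F F' g (W'.seq (a' + (r - l + 1))) := by
  have := h.left.three_le
  have := h.right.three_le
  rcases lt_or_ge r (l + l' - 2 : ℕ) with hrN | hrN
  · rw [gluedSeq, Int.add_mul_emod_self_left, Int.emod_eq_of_lt (by omega) hrN]
    split_ifs with hr'
    · obtain rfl : r = l - 1 := by omega
      rw [show (l : ℤ) - 1 - l + 1 = 0 by ring, add_zero, h.glue_start, ← add_sub_assoc,
        h.left.seq_last]
    · rfl
  · rw [show r + (l + l' - 2 : ℕ) * k = (r - (l + l' - 2 : ℕ)) + (l + l' - 2 : ℕ) * (k + 1)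
      by ring, gluedSeq, Int.add_mul_emod_self_left, Int.emod_eq_of_lt (by omega) (by omega),
      if_pos (by omega)]
    obtain rfl | rfl : r = (l + l' - 2 : ℕ) ∨ r = (l + l' - 2 : ℕ) + 1 := by omega
    · rw [sub_self, add_zero, ← h.glue_start, ← h.right.seq_last]
      congr 3
      omega
    · rw [show ((l + l' - 2 : ℕ) : ℤ) + 1 - (l + l' - 2 : ℕ) = 1 by ring,
        ← h.glue_start_succ, ← h.right.seq_last_succ]
      congr 3
      omega

lemma window_gluedSeq_left (hT : T.IsTriangulation) (k : ℤ) {r : ℤ}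
    (hr₀ : 0 ≤ r) (hr : r ≤ l - 2) :
    window (gluedSeq F F' g W W' a a' l l') (r + (l + l' - 2 : ℕ) * k) =
      (W.face (a + r)).image Sum.inl := by
  rw [W.face_eq_triple hT, window, Finset.image_insert, Finset.image_insert,
    Finset.image_singleton, add_right_comm r _ (1 : ℤ), add_right_comm r _ (2 : ℤ),
    h.gluedSeq_left k hr₀ (by omega), h.gluedSeq_left k (by omega) (by omega),
    h.gluedSeq_left k (by omega) (by omega), add_assoc, add_assoc]

lemma window_gluedSeq_right (hT' : T'.IsTriangulation) (k : ℤ) {r : ℤ}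
    (hr₀ : l - 1 ≤ r) (hr : r ≤ (l + l' - 2 : ℕ) - 1) :
    window (gluedSeq F F' g W W' a a' l l') (r + (l + l' - 2 : ℕ) * k) =
      (W'.face (a' + (r - l + 1))).image (glueMap F F' g) := by
  rw [W'.face_eq_triple hT', window, Finset.image_insert, Finset.image_insert,
    Finset.image_singleton, add_right_comm r _ (1 : ℤ), add_right_comm r _ (2 : ℤ),
    h.gluedSeq_right k hr₀ (by omega),
    h.gluedSeq_right k (by omega) (by omega),
    h.gluedSeq_right k (by omega) (by omega),
    show a' + (r + 1 - l + 1) = a' + (r - l + 1) + 1 by ring,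
    show a' + (r + 2 - l + 1) = a' + (r - l + 1) + 2 by ring]

lemma not_nonempty_toRight_window_left (hT : T.IsTriangulation) (k : ℤ) {r : ℤ}
    (hr₀ : 0 ≤ r) (hr : r ≤ l - 2) :
    ¬ (window (gluedSeq F F' g W W' a a' l l') (r + (l + l' - 2 : ℕ) * k)).toRight.Nonempty := by
  rw [h.window_gluedSeq_left hT k hr₀ hr, toRight_image_inl]
  exact Finset.not_nonempty_empty

lemma nonempty_toRight_window_right (hT' : T'.IsTriangulation) (hF' : F' ∈ T'.faces) (k : ℤ)
    {r : ℤ} (hr₀ : l - 1 ≤ r) (hr : r ≤ (l + l' - 2 : ℕ) - 1) :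
    (window (gluedSeq F F' g W W' a a' l l') (r + (l + l' - 2 : ℕ) * k)).toRight.Nonempty := by
  have := h.left.three_le
  have := h.right.three_le
  rw [h.window_gluedSeq_right hT' k hr₀ hr]
  exact toRight_image_glueMap_nonempty hT' hF' (W'.face_mem _)
    (h.right.face_ne _ (by omega) (by omega))

lemma window_mem_faces (hT : T.IsTriangulation) (hT' : T'.IsTriangulation) (t : ℤ) :
    window (gluedSeq F F' g W W' a a' l l') t ∈ (connectedSum T T' F F' g).faces := by
  have := h.left.three_le
  have := h.right.three_le
  obtain ⟨r, k, hr₀, hrN, rfl⟩ := exists_eq_add_mul t (show 0 < l + l' - 2 by omega)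
  rcases le_or_gt r (l - 2) with hr | hr
  · rw [h.window_gluedSeq_left hT _ hr₀ hr]
    exact .inl ⟨_, W.face_mem _, h.left.face_ne _ (by omega) hr, rfl⟩
  · rw [h.window_gluedSeq_right hT' _ (by omega) (by omega)]
    exact .inr ⟨_, W'.face_mem _, h.right.face_ne _ (by omega) (by omega), rfl⟩

lemma window_ne_window_succ (hT : T.IsTriangulation) (hT' : T'.IsTriangulation)
    (hF' : F' ∈ T'.faces) (hg : Set.BijOn g F F') (t : ℤ) :
    window (gluedSeq F F' g W W' a a' l l') t ≠
      window (gluedSeq F F' g W W' a a' l l') (t + 1) := by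
  have := h.left.three_le
  have := h.right.three_le
  obtain ⟨r, k, hr₀, hrN, rfl⟩ := exists_eq_add_mul t (show 0 < l + l' - 2 by omega)
  rw [add_right_comm]
  obtain hr | rfl | hr | rfl : r + 1 ≤ l - 2 ∨ r = l - 2 ∨
      (l - 1 ≤ r ∧ r + 1 ≤ (l + l' - 2 : ℕ) - 1) ∨ r = (l + l' - 2 : ℕ) - 1 := by omega
  · rw [h.window_gluedSeq_left hT k hr₀ (by omega), h.window_gluedSeq_left hT k (by omega) hr,
      ← add_assoc]
    exact fun he => W.face_ne _ (Finset.image_injective Sum.inl_injective he)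
  · refine fun he => h.not_nonempty_toRight_window_left hT k hr₀ le_rfl ?_
    rw [he]
    exact h.nonempty_toRight_window_right hT' hF' k (by omega) (by omega)
  · rw [h.window_gluedSeq_right hT' k hr.1 (by omega),
      h.window_gluedSeq_right hT' k (by omega) hr.2,
      show a' + (r + 1 - l + 1) = a' + (r - l + 1) + 1 by ring]
    exact fun he => W'.face_ne _ (Finset.image_injective (glueMap_injective hg) he)
  · rw [show ((l + l' - 2 : ℕ) : ℤ) - 1 + 1 + (l + l' - 2 : ℕ) * k =
      0 + (l + l' - 2 : ℕ) * (k + 1) by ring]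
    refine fun he => h.not_nonempty_toRight_window_left hT (k + 1) le_rfl (by omega) ?_
    rw [← he]
    exact h.nonempty_toRight_window_right hT' hF' k (by omega) le_rfl

lemma le_of_periodic (hT : T.IsTriangulation) (hT' : T'.IsTriangulation) (hF' : F' ∈ T'.faces)
    {m : ℕ} (hm : 0 < m) (hper : Periodic (gluedSeq F F' g W W' a a' l l') m) :
    l + l' - 2 ≤ m := by
  have := h.left.three_le
  have := h.right.three_le
  by_contra hlt
  have hw : ∀ t, window (gluedSeq F F' g W W' a a' l l') (t + m) =
      window (gluedSeq F F' g W W' a a' l l') t := fun t => by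
    rw [window, window, add_right_comm t _ (1 : ℤ), add_right_comm t _ (2 : ℤ), hper, hper,
      hper]
  have h₀ : ¬ (window (gluedSeq F F' g W W' a a' l l') m).toRight.Nonempty := by
    rw [← zero_add (m : ℤ), hw]
    simpa using h.not_nonempty_toRight_window_left hT 0 le_rfl (by omega)
  have h₁ : (window (gluedSeq F F' g W W' a a' l l') (m - 1)).toRight.Nonempty := by
    rw [sub_eq_neg_add, hw,
      show (-1 : ℤ) = ((l + l' - 2 : ℕ) - 1) + (l + l' - 2 : ℕ) * (-1) by ring]
    exact h.nonempty_toRight_window_right hT' hF' _ (by omega) le_rfl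
  rcases le_or_gt (m : ℤ) (l - 2) with hml | hml
  · exact h.not_nonempty_toRight_window_left hT 0 (r := m - 1) (by omega) (by omega)
      (by simpa using h₁)
  · have := h.nonempty_toRight_window_right hT' hF' 0 (r := m) (by omega) (by omega)
    exact h₀ (by simpa using this)

lemma seq_of_not_iff (hT : T.IsTriangulation) (hT' : T'.IsTriangulation) (hF' : F' ∈ T'.faces)
    {t : ℤ} (ht : ¬ ((window (gluedSeq F F' g W W' a a' l l') t).toRight.Nonempty ↔
      (window (gluedSeq F F' g W W' a a' l l') (t + 1)).toRight.Nonempty)) :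
    gluedSeq F F' g W W' a a' l l' (t + 1) = Sum.inl (W.seq a) ∧
      gluedSeq F F' g W W' a a' l l' (t + 2) = Sum.inl (W.seq (a + 1)) := by
  have := h.left.three_le
  have := h.right.three_le
  obtain ⟨r, k, hr₀, hrN, rfl⟩ := exists_eq_add_mul t (show 0 < l + l' - 2 by omega)
  rw [add_right_comm _ _ (1 : ℤ)] at ht
  rw [add_right_comm _ _ (1 : ℤ), add_right_comm _ _ (2 : ℤ)]
  obtain hr | rfl | hr | rfl : r + 1 ≤ l - 2 ∨ r = l - 2 ∨
      (l - 1 ≤ r ∧ r + 1 ≤ (l + l' - 2 : ℕ) - 1) ∨ r = (l + l' - 2 : ℕ) - 1 := by omega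
  · exact (ht (iff_of_false (h.not_nonempty_toRight_window_left hT k hr₀ (by omega))
      (h.not_nonempty_toRight_window_left hT k (by omega) hr))).elim
  · rw [h.gluedSeq_left k (by omega) (by omega), h.gluedSeq_left k (by omega) (by omega),
      show a + (l - 2 + 1) = a + l - 1 by ring, show a + (l - 2 + 2) = a + l by ring,
      h.left.seq_last, h.left.seq_last_succ]
    exact ⟨rfl, rfl⟩
  · exact (ht (iff_of_true (h.nonempty_toRight_window_right hT' hF' k hr.1 (by omega))
      (h.nonempty_toRight_window_right hT' hF' k (by omega) hr.2))).elim
  · rw [show ((l + l' - 2 : ℕ) : ℤ) - 1 + 1 + (l + l' - 2 : ℕ) * k =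
        0 + (l + l' - 2 : ℕ) * (k + 1) by ring,
      show ((l + l' - 2 : ℕ) : ℤ) - 1 + 2 + (l + l' - 2 : ℕ) * k =
        1 + (l + l' - 2 : ℕ) * (k + 1) by ring,
      h.gluedSeq_left (k + 1) le_rfl (by omega), h.gluedSeq_left (k + 1) (by omega) (by omega),
      add_zero]
    exact ⟨rfl, rfl⟩

lemma exists_not_iff (hT : T.IsTriangulation) (hT' : T'.IsTriangulation) (hF' : F' ∈ T'.faces) :
    ∃ t, ¬ ((window (gluedSeq F F' g W W' a a' l l') t).toRight.Nonempty ↔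
      (window (gluedSeq F F' g W W' a a' l l') (t + 1)).toRight.Nonempty) := by
  have := h.left.three_le
  have := h.right.three_le
  refine ⟨l - 2 + (l + l' - 2 : ℕ) * 0, fun hiff =>
    h.not_nonempty_toRight_window_left hT 0 (by omega) le_rfl (hiff.mpr ?_)⟩
  rw [add_right_comm, show (l : ℤ) - 2 + 1 = l - 1 by ring]
  exact h.nonempty_toRight_window_right hT' hF' 0 le_rfl (by omega)

/-- A face `G` of the connected sum comes from `T'` iff `G.toRight.Nonempty`. -/
theorem exists_zigzag_crosses (hT : T.IsTriangulation) (hT' : T'.IsTriangulation)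
    (hF' : F' ∈ T'.faces) (hg : Set.BijOn g F F') :
    ∃ C : (connectedSum T T' F F' g).Zigzag,
      (∀ t, C.Crosses (fun G => G.toRight.Nonempty) t →
        C.seq (t + 1) = Sum.inl (W.seq a) ∧ C.seq (t + 2) = Sum.inl (W.seq (a + 1))) ∧
      ∃ t, C.Crosses (fun G => G.toRight.Nonempty) t := by
  have := h.left.three_le
  have := h.right.three_le
  refine ⟨Zigzag.ofWindows (fun G hG => connectedSum_face_card hT hT' hg hG)
    (fun G hG u hu w hw => connectedSum_adj_of_mem_face hT hT' hG hu hw)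
    (gluedSeq F F' g W W' a a' l l') (l + l' - 2) (by omega) gluedSeq_periodic
    (fun m hm => h.le_of_periodic hT hT' hF' hm) (h.window_mem_faces hT hT')
    (h.window_ne_window_succ hT hT' hF' hg), fun t ht => h.seq_of_not_iff hT hT' hF' ht,
    h.exists_not_iff hT hT' hF'⟩

end GluableExcursions

lemma exists_zigzag_connectedSum_crosses (hT : T.IsTriangulation) (hT' : T'.IsTriangulation)
    (hF' : F' ∈ T'.faces) (hg : Set.BijOn g F F') {Z : T.Zigzag} {Z' : T'.Zigzag}
    (h : Z.Is222SecondFace F) (h' : Z'.Is222SecondFace F') {u w : V} (hu : u ∈ F) (hw : w ∈ F)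
    (huw : u ≠ w) :
    ∃ C : (connectedSum T T' F F' g).Zigzag,
      (∀ t, C.Crosses (fun G => G.toRight.Nonempty) t →
        C.seq (t + 1) = Sum.inl u ∧ C.seq (t + 2) = Sum.inl w) ∧
      ∃ t, C.Crosses (fun G => G.toRight.Nonempty) t := by
  obtain ⟨W, a, l, hW, rfl, rfl⟩ := h.hasExcursion hT hu hw huw
  obtain ⟨W', a', l', hW', hu', hw'⟩ :=
    h'.hasExcursion hT' (hg.mapsTo hu) (hg.mapsTo hw) (hg.injOn.ne hu hw huw)
  exact GluableExcursions.exists_zigzag_crosses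
    ⟨hW, hW', by rw [hu', glueMap_apply_of_mem hg hu], by rw [hw', glueMap_apply_of_mem hg hw]⟩
    hT hT' hF' hg

end Gluing

end PreTriangulation

open PreTriangulation

theorem statement_16_general {V : Type u} {V' : Type v} [DecidableEq V] [DecidableEq V'] [Nonempty V]
    (T : PreTriangulation V) (T' : PreTriangulation V')
    (hT : T.IsTriangulation) (hT' : T'.IsTriangulation)
    (F : Finset V) (F' : Finset V') (hF' : F' ∈ T'.faces)
    (Z : T.Zigzag) (Z' : T'.Zigzag)
    (h222 : Z.Is222SecondFace F) (h222' : Z'.Is222SecondFace F') :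
    ∀ g : V → V', Set.BijOn g ↑F ↑F' → ¬ (connectedSum T T' F F' g).ZKnotted := by
  intro g hg hknot
  have ⟨x, y, z, hF, hxy, hxz, hyz, _⟩ := h222
  have hmem : ∀ v ∈ ({x, y, z} : Finset V), v ∈ F := fun v hv => hF ▸ hv
  obtain ⟨C₁, hC₁, -⟩ := exists_zigzag_connectedSum_crosses hT hT' hF' hg h222 h222'
    (hmem y (by simp)) (hmem z (by simp)) hyz
  obtain ⟨C₂, hC₂, t, ht⟩ := exists_zigzag_connectedSum_crosses hT hT' hF' hg h222 h222'
    (hmem z (by simp)) (hmem x (by simp)) hxz.symm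
  obtain ⟨hz, hx⟩ := hC₂ t ht
  rcases (hknot.2 C₁ C₂).seq_of_crosses hC₁ ht with ⟨hy, -⟩ | ⟨-, hy⟩
  · exact hyz (Sum.inl_injective (hy.symm.trans hz))
  · exact hxy (Sum.inl_injective (hx.symm.trans hy))

theorem statement_16 {V : Type u} {V' : Type v} [DecidableEq V] [DecidableEq V'] [Nonempty V]
    (T : PreTriangulation V) (T' : PreTriangulation V')
    (hT : T.IsTriangulation) (hT' : T'.IsTriangulation)
    (hzT : T.ZKnotted) (hzT' : T'.ZKnotted)
    (F : Finset V) (hF : F ∈ T.faces) (F' : Finset V') (hF' : F' ∈ T'.faces)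
    (Z : T.Zigzag) (Z' : T'.Zigzag)
    (h222 : Z.Is222SecondFace F) (h222' : Z'.Is222SecondFace F') :
    ∀ g : V → V', Set.BijOn g ↑F ↑F' → ¬ (connectedSum T T' F F' g).ZKnotted :=
  statement_16_general T T' hT hT' F F' hF' Z Z' h222 h222'
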